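/- arXiv:2409.11296 — 2 statements merged into one kernel-verified Lean document; each statement's English description precedes it below -/
import Mathlib

section
/- Let n ∈ ℕ with n ≥ 1, let A > 0 and r > 0, and let F : ℝⁿ → ℝⁿ be C² on the closed unit ball {x ∈ ℝⁿ : |x| ≤ 1}. Assume: (a) ‖DF(0)·v‖ ≥ r‖v‖ for every v ∈ ℝⁿ (i.e. the smallest singular value of the Jacobian DF(0) is at least r); (b) |∂²F_k/∂x_i∂x_j(x)| ≤ A for all indices i, j, k and all x in the closed unit ball; (c) r/(4n²A) ≤ 1. Set D₁ = 1/(4n²A) and D₂ = 1/(8n²A). Then: (i) F is injective on the closed ball {x : |x| ≤ D₁ r}; and (ii) the image F({x : |x| ≤ D₁ r}) contains the closed ball {y ∈ ℝⁿ : |y − F(0)| ≤ D₂ r²}. -/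
/-!
The entry bound on the second partials gives `‖D²F‖ ≤ n²A` on the unit ball, so on the ball of
radius `ρ = r / (4n²A)` the map `F - DF(0)` is `(n²A ρ = r/4)`-Lipschitz. As `DF(0)` stretches
every vector by at least `r`, `F` stretches distances on that ball by at least `3r/4`, hence is
injective there. For the image, the iteration behind
`ApproximatesLinearOn.surjOn_closedBall_of_nonlinearRightInverse`, run with an inverse of `DF(0)`
of norm `≤ 1/r`, reaches every point within `(r - r/4) ρ ≥ r² / (8n²A)` of `F(0)`.
-/

open Metric Set NNReal

namespace EuclideanSpace

variable {ι κ : Type*} [Fintype ι] [Fintype κ]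

lemma sum_smul_single [DecidableEq ι] (u : EuclideanSpace ℝ ι) :
    ∑ i, u i • single i (1 : ℝ) = u := by
  simpa using (basisFun ι ℝ).sum_repr u

lemma norm_le_sum_abs (u : EuclideanSpace ℝ ι) : ‖u‖ ≤ ∑ i, |u i| := by
  classical
  conv_lhs => rw [← sum_smul_single u]
  refine (norm_sum_le _ _).trans_eq (Finset.sum_congr rfl fun i _ => ?_)
  simp [norm_smul]

lemma sum_abs_le_sqrt_card_mul_norm (u : EuclideanSpace ℝ ι) :
    ∑ i, |u i| ≤ √(Fintype.card ι) * ‖u‖ := by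
  have hsq : (∑ i, |u i|) ^ 2 ≤ Fintype.card ι * ∑ i, |u i| ^ 2 := by
    simpa using sq_sum_le_card_mul_sum_sq (s := Finset.univ) (f := fun i => |u i|)
  calc ∑ i, |u i| = √((∑ i, |u i|) ^ 2) := (Real.sqrt_sq (by positivity)).symm
    _ ≤ √(Fintype.card ι * ∑ i, |u i| ^ 2) := Real.sqrt_le_sqrt hsq
    _ = √(Fintype.card ι) * ‖u‖ := by
      rw [Real.sqrt_mul (Nat.cast_nonneg _), norm_eq]
      simp only [Real.norm_eq_abs]

lemma bilinear_apply_eq_sum [DecidableEq ι]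
    (B : EuclideanSpace ℝ ι →L[ℝ] EuclideanSpace ℝ ι →L[ℝ] EuclideanSpace ℝ κ)
    (u v : EuclideanSpace ℝ ι) :
    B u v = ∑ i, ∑ j, (u i * v j) • B (single i 1) (single j 1) := by
  conv_lhs => rw [← sum_smul_single u, ← sum_smul_single v]
  simp only [map_sum, map_smul, FunLike.coe_sum, Finset.sum_apply,
    FunLike.coe_smul, Pi.smul_apply, Finset.smul_sum, smul_smul]
  rw [Finset.sum_comm]
  simp_rw [mul_comm (v _)]

/-- The factor `√(card ι)` of Cauchy–Schwarz is paid once per argument, the factor `card κ` for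
passing from the entries to the Euclidean norm. -/
lemma opNorm_le_of_abs_apply_single_single_le [DecidableEq ι] {A : ℝ} (hA : 0 ≤ A)
    (B : EuclideanSpace ℝ ι →L[ℝ] EuclideanSpace ℝ ι →L[ℝ] EuclideanSpace ℝ κ)
    (hB : ∀ i j k, |B (single i 1) (single j 1) k| ≤ A) :
    ‖B‖ ≤ Fintype.card ι * Fintype.card κ * A := by
  have hentry : ∀ i j, ‖B (single i 1) (single j 1)‖ ≤ Fintype.card κ * A := fun i j =>
    (norm_le_sum_abs _).trans ((Finset.sum_le_sum fun k _ => hB i j k).trans_eq (by simp))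
  refine B.opNorm_le_bound₂ (by positivity) fun u v => ?_
  calc ‖B u v‖ ≤ ∑ i, ∑ j, |u i| * |v j| * (Fintype.card κ * A) := by
        rw [bilinear_apply_eq_sum]
        refine (norm_sum_le _ _).trans (Finset.sum_le_sum fun i _ => ?_)
        refine (norm_sum_le _ _).trans (Finset.sum_le_sum fun j _ => ?_)
        rw [norm_smul, Real.norm_eq_abs, abs_mul]
        exact mul_le_mul_of_nonneg_left (hentry i j) (by positivity)
    _ = Fintype.card κ * A * ((∑ i, |u i|) * ∑ j, |v j|) := by
        rw [Finset.sum_mul_sum, Finset.mul_sum]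
        refine Finset.sum_congr rfl fun i _ => ?_
        rw [Finset.mul_sum]
        exact Finset.sum_congr rfl fun j _ => by ring
    _ ≤ Fintype.card κ * A * ((√(Fintype.card ι) * ‖u‖) * (√(Fintype.card ι) * ‖v‖)) := by
        gcongr <;> exact sum_abs_le_sqrt_card_mul_norm _
    _ = Fintype.card κ * A * (√(Fintype.card ι) * √(Fintype.card ι)) * ‖u‖ * ‖v‖ := by ring
    _ = Fintype.card ι * Fintype.card κ * A * ‖u‖ * ‖v‖ := by
        rw [Real.mul_self_sqrt (Nat.cast_nonneg _)]
        ring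

end EuclideanSpace

section
variable {𝕜 E F : Type*} [NontriviallyNormedField 𝕜] [NormedAddCommGroup E] [NormedSpace 𝕜 E]
  [NormedAddCommGroup F] [NormedSpace 𝕜 F]

lemma ApproximatesLinearOn.injOn_of_mul_norm_le {f : E → F} {L : E →L[𝕜] F} {s : Set E}
    {c : ℝ≥0} {r : ℝ} (hf : ApproximatesLinearOn f L s c) (hc : c < r)
    (hL : ∀ v, r * ‖v‖ ≤ ‖L v‖) : InjOn f s := by
  intro x hx y hy hxy
  have happrox := hf x hx y hy
  rw [hxy, sub_self, zero_sub, norm_neg] at happrox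
  have hgap : (r - c) * ‖x - y‖ ≤ 0 := by linarith [hL (x - y)]
  exact sub_eq_zero.1 (norm_le_zero_iff.1 (nonpos_of_mul_nonpos_right hgap (sub_pos.2 hc)))

lemma ContinuousLinearMap.surjective_of_mul_norm_le [FiniteDimensional 𝕜 E] (L : E →L[𝕜] E)
    {r : ℝ} (hr : 0 < r) (hL : ∀ v, r * ‖v‖ ≤ ‖L v‖) : Function.Surjective L := by
  refine LinearMap.surjective_of_injective (f := (L : E →ₗ[𝕜] E)) ?_
  refine (injective_iff_map_eq_zero L).2 fun v hv => norm_le_zero_iff.1 ?_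
  have hLv := hL v
  rw [hv, norm_zero] at hLv
  exact nonpos_of_mul_nonpos_right hLv hr

noncomputable def ContinuousLinearMap.nonlinearRightInverseOfMulNormLe [FiniteDimensional 𝕜 E]
    (L : E →L[𝕜] E) {r : ℝ} (hr : 0 < r) (hL : ∀ v, r * ‖v‖ ≤ ‖L v‖) :
    L.NonlinearRightInverse where
  toFun := Function.surjInv (L.surjective_of_mul_norm_le hr hL)
  nnnorm := ⟨r⁻¹, inv_nonneg.2 hr.le⟩
  bound' y := by
    change _ ≤ r⁻¹ * _
    rw [le_inv_mul_iff₀ hr]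
    simpa only [Function.surjInv_eq] using
      hL (Function.surjInv (L.surjective_of_mul_norm_le hr hL) y)
  right_inv' := Function.surjInv_eq _

end

section
variable {E F : Type*} [NormedAddCommGroup E] [NormedSpace ℝ E] [NormedAddCommGroup F]
  [NormedSpace ℝ F]

lemma Convex.approximatesLinearOn_fderivWithin {f : E → F} {s : Set E} {x₀ : E} {M δ : ℝ}
    {c : ℝ≥0} (hs : Convex ℝ s) (hu : UniqueDiffOn ℝ s) (hf : ContDiffOn ℝ 2 f s)
    (hM : ∀ x ∈ s, ‖fderivWithin ℝ (fderivWithin ℝ f s) s x‖ ≤ M) (hx₀ : x₀ ∈ s)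
    (hδ : closedBall x₀ δ ⊆ s) (hc : M * δ ≤ c) :
    ApproximatesLinearOn f (fderivWithin ℝ f s x₀) (closedBall x₀ δ) c := by
  have hdiff : DifferentiableOn ℝ f s := hf.differentiableOn (by norm_num)
  have hdiff' : DifferentiableOn ℝ (fderivWithin ℝ f s) s :=
    (hf.fderivWithin hu (by norm_num)).differentiableOn one_ne_zero
  have hM₀ : 0 ≤ M := (norm_nonneg (fderivWithin ℝ (fderivWithin ℝ f s) s x₀)).trans (hM x₀ hx₀)
  have hclose : ∀ x ∈ closedBall x₀ δ, ‖fderivWithin ℝ f s x - fderivWithin ℝ f s x₀‖ ≤ c :=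
    fun x hx => calc
      _ ≤ M * ‖x - x₀‖ := hs.norm_image_sub_le_of_norm_fderivWithin_le hdiff' hM hx₀ (hδ hx)
      _ ≤ M * δ := mul_le_mul_of_nonneg_left (mem_closedBall_iff_norm.1 hx) hM₀
      _ ≤ c := hc
  intro x hx y hy
  exact (convex_closedBall x₀ δ).norm_image_sub_le_of_norm_hasFDerivWithin_le'
    (fun z hz => (hdiff z (hδ hz)).hasFDerivWithinAt.mono hδ) hclose hy hx

end

theorem quantitative_inverse_function_theorem_general
    (n : ℕ) (A r : ℝ) (hA : 0 < A) (hr : 0 < r)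
    (F : EuclideanSpace ℝ (Fin n) → EuclideanSpace ℝ (Fin n))
    (hF : ContDiffOn ℝ 2 F (Metric.closedBall 0 1))
    (hjac : ∀ v : EuclideanSpace ℝ (Fin n), r * ‖v‖ ≤ ‖fderiv ℝ F 0 v‖)
    (hsecond : ∀ x ∈ Metric.closedBall (0 : EuclideanSpace ℝ (Fin n)) 1,
      ∀ i j k : Fin n,
        |iteratedFDerivWithin ℝ 2 F (Metric.closedBall 0 1) x
            ![EuclideanSpace.single i 1, EuclideanSpace.single j 1] k| ≤ A)
    (hc : r / (4 * (n : ℝ) ^ 2 * A) ≤ 1) :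
    Set.InjOn F (Metric.closedBall 0 (1 / (4 * (n : ℝ) ^ 2 * A) * r)) ∧
    Metric.closedBall (F 0) (1 / (8 * (n : ℝ) ^ 2 * A) * r ^ 2)
      ⊆ F '' Metric.closedBall 0 (1 / (4 * (n : ℝ) ^ 2 * A) * r) := by
  set s := closedBall (0 : EuclideanSpace ℝ (Fin n)) 1
  set ρ := 1 / (4 * (n : ℝ) ^ 2 * A) * r
  have hρ : 0 ≤ ρ := by positivity
  have hρs : closedBall 0 ρ ⊆ s := closedBall_subset_closedBall <|
    (by ring : ρ = r / (4 * (n : ℝ) ^ 2 * A)).trans_le hc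
  have hu : UniqueDiffOn ℝ s := uniqueDiffOn_convex (convex_closedBall 0 1)
    ⟨0, ball_subset_interior_closedBall (mem_ball_self one_pos)⟩
  have hD2 : ∀ x ∈ s, ‖fderivWithin ℝ (fderivWithin ℝ F s) s x‖ ≤ n * n * A := fun x hx => by
    refine (EuclideanSpace.opNorm_le_of_abs_apply_single_single_le hA.le _ fun i j k => by
      simpa only [iteratedFDerivWithin_two_apply' F hu hx] using hsecond x hx i j k).trans_eq ?_
    simp only [Fintype.card_fin]
  have hlin : n * n * A * ρ ≤ r / 4 := calc
    n * n * A * ρ = n ^ 2 * A * (n ^ 2 * A)⁻¹ * (r / 4) := by ring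
    _ ≤ r / 4 := mul_le_of_le_one_left (by positivity) mul_inv_le_one
  have happrox : ApproximatesLinearOn F (fderiv ℝ F 0) (closedBall 0 ρ) ⟨r / 4, by positivity⟩ := by
    rw [← fderivWithin_of_mem_nhds (closedBall_mem_nhds 0 one_pos)]
    exact (convex_closedBall 0 1).approximatesLinearOn_fderivWithin hu hF hD2
      (mem_closedBall_self zero_le_one) hρs hlin
  refine ⟨happrox.injOn_of_mul_norm_le (by change r / 4 < r; linarith) hjac, ?_⟩
  refine (closedBall_subset_closedBall ?_).trans (happrox.surjOn_closedBall_of_nonlinearRightInverse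
    ((fderiv ℝ F 0).nonlinearRightInverseOfMulNormLe hr hjac) hρ subset_rfl)
  change _ ≤ ((r⁻¹)⁻¹ - r / 4) * ρ
  calc 1 / (8 * (n : ℝ) ^ 2 * A) * r ^ 2 = r / 2 * ρ := by ring
    _ ≤ ((r⁻¹)⁻¹ - r / 4) * ρ := by rw [inv_inv]; gcongr; linarith

/-- Quantitative inverse function theorem with singular values: if `F` is `C²` on the
closed unit ball, its Jacobian at `0` has smallest singular value at least `r`
(i.e. `‖DF(0)v‖ ≥ r‖v‖` for all `v`), all second partials are bounded by `A` on the
closed unit ball, and `r/(4n²A) ≤ 1`, then with `D₁ = 1/(4n²A)` and `D₂ = 1/(8n²A)`,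
`F` is injective on the ball of radius `D₁ r` and its image of that ball contains the
closed ball of radius `D₂ r²` around `F(0)`. -/
theorem quantitative_inverse_function_theorem
    (n : ℕ) (hn : 1 ≤ n) (A r : ℝ) (hA : 0 < A) (hr : 0 < r)
    (F : EuclideanSpace ℝ (Fin n) → EuclideanSpace ℝ (Fin n))
    (hF : ContDiffOn ℝ 2 F (Metric.closedBall 0 1))
    (hjac : ∀ v : EuclideanSpace ℝ (Fin n), r * ‖v‖ ≤ ‖fderiv ℝ F 0 v‖)
    (hsecond : ∀ x ∈ Metric.closedBall (0 : EuclideanSpace ℝ (Fin n)) 1,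
      ∀ i j k : Fin n,
        |iteratedFDerivWithin ℝ 2 F (Metric.closedBall 0 1) x
            ![EuclideanSpace.single i 1, EuclideanSpace.single j 1] k| ≤ A)
    (hc : r / (4 * (n : ℝ) ^ 2 * A) ≤ 1) :
    Set.InjOn F (Metric.closedBall 0 (1 / (4 * (n : ℝ) ^ 2 * A) * r)) ∧
    Metric.closedBall (F 0) (1 / (8 * (n : ℝ) ^ 2 * A) * r ^ 2)
      ⊆ F '' Metric.closedBall 0 (1 / (4 * (n : ℝ) ^ 2 * A) * r) :=
  quantitative_inverse_function_theorem_general n A r hA hr F hF hjac hsecond hc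
end

section
/- Let M be the 6×6 real matrix whose rows are: row 1 = (0, −ρ₃, 0, −β₃ + ν₂, 0, −(ρ₂ − ρ₃)); row 2 = (ρ₃ν₂, 0, −ρ₃, −δ₃ + α₃ν₂, 0, −(ρ₂α₂ − ρ₃α₃)); row 3 = (0, ν₂ρ₃, 0, γ₃ − 2ρ₃E₃ − C₃/2 + β₃ν₂, 0, −(ρ₂β₂ − ρ₃β₃)); row 4 = (0, ρ₃, 0, β₃ − ν₊, −(ρ₃ − ρ₀), 0); row 5 = (−ν₊ρ₃, 0, ρ₃, δ₃ − ν₊α₃, −(ρ₃α₃ − ρ₀u₊), 0); row 6 = (0, −ν₊ρ₃, 0, −γ₃ + 2ρ₃E₃ + C₃/2 − ν₊β₃, −(ρ₃β₃ − ρ₀w), 0), with the exact rational constants listed in the context. Then the smallest singular value of M is at least 2; equivalently, ‖M·v‖ ≥ 2‖v‖ for every v ∈ ℝ⁶ (Euclidean norm). -/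
namespace Stmt11

noncomputable def ρ0 : ℝ := 2708112612978501/281474976710656
noncomputable def ρ2 : ℝ := 2057060350258899/562949953421312
noncomputable def ρ3 : ℝ := 3062207031116133/281474976710656
noncomputable def α2 : ℝ := -4833381446756075/562949953421312
noncomputable def α3 : ℝ := 3121572020159473/562949953421312
noncomputable def β2 : ℝ := -1114286601116939/70368744177664
noncomputable def β3 : ℝ := -6219197795695073/562949953421312
noncomputable def γ3 : ℝ := -8954832877447991/140737488355328
noncomputable def δ3 : ℝ := -2871256077954219/35184372088832
noncomputable def ν2 : ℝ := -4856156003780791/562949953421312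
noncomputable def νp : ℝ := 7162856387903725/562949953421312
noncomputable def E3 : ℝ := 5400383921383283/1125899906842624
noncomputable def C3 : ℝ := 1855257252703141/8796093022208
noncomputable def up : ℝ := 3603433899522037/562949953421312
noncomputable def w : ℝ := -996118042660627/70368744177664

noncomputable def M : Matrix (Fin 6) (Fin 6) ℝ :=
  !![0, -ρ3, 0, -β3 + ν2, 0, -(ρ2 - ρ3);
     ρ3 * ν2, 0, -ρ3, -δ3 + α3 * ν2, 0, -(ρ2 * α2 - ρ3 * α3);
     0, ν2 * ρ3, 0, γ3 - 2 * ρ3 * E3 - C3 / 2 + β3 * ν2, 0, -(ρ2 * β2 - ρ3 * β3);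
     0, ρ3, 0, β3 - νp, -(ρ3 - ρ0), 0;
     -νp * ρ3, 0, ρ3, δ3 - νp * α3, -(ρ3 * α3 - ρ0 * up), 0;
     0, -νp * ρ3, 0, -γ3 + 2 * ρ3 * E3 + C3 / 2 - νp * β3, -(ρ3 * β3 - ρ0 * w), 0]

open Matrix

theorem mul_norm_le_norm_toEuclideanLin {m n : Type*} [Fintype m] [Fintype n] [DecidableEq n]
    (A : Matrix m n ℝ) {c : ℝ} (h : ∀ x : n → ℝ, c ^ 2 * ∑ j, x j ^ 2 ≤ ∑ i, (A *ᵥ x) i ^ 2)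
    (v : EuclideanSpace ℝ n) : c * ‖v‖ ≤ ‖toEuclideanLin A v‖ := by
  refine le_of_sq_le_sq ?_ (norm_nonneg _)
  simpa [mul_pow, EuclideanSpace.norm_sq_eq, ofLp_toLpLin] using h v

/-- The Cholesky factor of `Mᵀ M - 4`, rounded to integers. -/
def roundedCholeskyFactor : Matrix (Fin 6) (Fin 6) ℝ :=
  !![167, 0, -3, 107, -1, -51;
     0, 168, 0, -243, 13, 34;
     0, 0, 15, -114, 1, -77;
     0, 0, 0, 380, -9, 51;
     0, 0, 0, 0, 1, 5;
     0, 0, 0, 0, 0, 5]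

/-- In the coordinates `z = roundedCholeskyFactor x` the form `|M x|² - 4 |x|²` has a diagonally
dominant matrix, hence is a nonnegative combination of the `(z i ± z j)²`. -/
theorem four_mul_sum_sq_le_sum_sq_M_mulVec (x : Fin 6 → ℝ) :
    2 ^ 2 * ∑ i, x i ^ 2 ≤ ∑ i, (M *ᵥ x) i ^ 2 := by
  set z := roundedCholeskyFactor *ᵥ x with hz
  have hsq : ∀ i j, 0 ≤ (z i + z j) ^ 2 ∧ 0 ≤ (z i - z j) ^ 2 := fun _ _ => ⟨sq_nonneg _, sq_nonneg _⟩
  simp only [Fin.forall_fin_succ, IsEmpty.forall_iff, and_true, Fin.sum_univ_six, mulVec,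
    dotProduct, M, roundedCholeskyFactor, of_apply, cons_val', cons_val_zero, cons_val_one, cons_val,
    cons_val_succ, empty_val', cons_val_fin_one, hz,
    ρ0, ρ2, ρ3, α2, α3, β2, β3, γ3, δ3, ν2, νp, E3, C3, up, w] at hsq ⊢
  linarith

/-- The smallest singular value of the Jacobian `M = DΓ` is at least `2`:
equivalently, `‖M v‖ ≥ 2 ‖v‖` for every `v ∈ ℝ⁶` with the Euclidean norm. -/
theorem jacobian_smallest_singular_value_ge_two :
    ∀ v : EuclideanSpace ℝ (Fin 6), 2 * ‖v‖ ≤ ‖Matrix.toEuclideanLin M v‖ :=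
  mul_norm_le_norm_toEuclideanLin M four_mul_sum_sq_le_sum_sq_M_mulVec

end Stmt11
end
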